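/- arXiv:1608.03960 — 8 statements merged into one kernel-verified Lean document; each statement's English description precedes it below -/
import Mathlib

section
/- If an operation o2 causally depends on o1 (meaning o1's timestamp is in the set of timestamps applied before o2 was generated, and o2's counter is chosen strictly greater than all counters of applied operations), then the Lamport timestamp of o1 is strictly less than that of o2. -/
/-- The ordering on Lamport timestamps `(c, p)`: lexicographic by counter, then replica ID. -/
def lamportLt {ReplicaID : Type*} [LinearOrder ReplicaID]
    (t1 t2 : ℕ × ReplicaID) : Prop :=
  t1.1 < t2.1 ∨ (t1.1 = t2.1 ∧ t1.2 < t2.2)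

/-- If `id1` (the timestamp of a causal dependency `o1`) is among the operations applied
before `o2` was generated, and `o2`'s counter is chosen to be `ctr + 1` where `ctr` bounds
all counters of applied operations, then `id1 < id2` in the Lamport ordering. -/
theorem lamport_causal_lt {ReplicaID : Type*} [LinearOrder ReplicaID]
    (applied : Set (ℕ × ReplicaID)) (id1 id2 : ℕ × ReplicaID) (ctr : ℕ)
    (h1 : id1 ∈ applied)
    (hctr : ∀ a ∈ applied, a.1 ≤ ctr)
    (h2 : id2.1 = ctr + 1) :
    lamportLt id1 id2 := by
  left
  have := hctr id1 h1
  omega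
end

section
/- In a linked list represented by a 'next' function, if element b is reachable from element a (b appears after a), and a new element is inserted between two adjacent elements (redirecting next pointers), then b is still reachable from a in the modified list. -/
/-- `b` appears after `a` in the linked list given by `next`: `b` is reachable
from `a` by following `next` pointers one or more times. -/
def appearsAfter {Key : Type*} (next : Key → Option Key) (a b : Key) : Prop :=
  Relation.TransGen (fun x y => next x = some y) a b

/-- Inserting a fresh element `id` between `prev` and its successor preserves the
appears-after relation: if `b` appeared after `a`, it still does in the modified list. -/
theorem appearsAfter_preserved_by_insert {Key : Type*} [DecidableEq Key]
    (next : Key → Option Key) (a b prev id : Key)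
    (hfresh : ∀ k, next k ≠ some id)
    (hid : next id = none)
    (ha : a ≠ id)
    (hab : appearsAfter next a b) :
    appearsAfter
      (fun k => if k = prev then some id else if k = id then next prev else next k)
      a b := by
  set next' : Key → Option Key :=
    fun k => if k = prev then some id else if k = id then next prev else next k with hnext'
  have step : ∀ x y, x ≠ id → next x = some y →
      Relation.TransGen (fun u v => next' u = some v) x y := by
    intro x y hx hxy
    by_cases hxp : x = prev
    · subst hxp
      have hip : id ≠ x := Ne.symm hx
      refine Relation.TransGen.head (b := id) (by simp [hnext']) (Relation.TransGen.single ?_)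
      simp [hnext', hip, hxy]
    · exact Relation.TransGen.single (by simp [hnext', hxp, hx, hxy])
  suffices h : Relation.TransGen (fun u v => next' u = some v) a b ∧ b ≠ id by exact h.1
  induction hab with
  | single h =>
      exact ⟨step _ _ ha h, fun he => hfresh a (he ▸ h)⟩
  | tail hxy h ih =>
      exact ⟨ih.1.trans (step _ _ ih.2 h), fun he => hfresh _ (he ▸ h)⟩
end

section
/- Consider two insertions into a totally ordered linked list using the RGA rule: a new element with timestamp id is inserted starting after position prev by skipping over all successive elements whose timestamp is greater than id, then splicing in before the first element with smaller timestamp (or at the end). If two concurrent insertions with distinct timestamps id_r > id_s both have the same starting position prev, then in the final list id_r appears before id_s, regardless of the order in which the two insertions are applied. -/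
/-- RGA insertion of a new timestamp `id` into the list segment following its insertion
position: skip over successive elements whose timestamp is greater than `id`, then splice
`id` in before the first element with smaller timestamp (or at the end). -/
def rgaBody (id : ℕ) : List ℕ → List ℕ
  | [] => [id]
  | x :: xs => if x < id then id :: x :: xs else x :: rgaBody id xs

/-- `a` appears before `b` in the list `l`. -/
def appearsBefore (a b : ℕ) (l : List ℕ) : Prop :=
  l.idxOf a < l.idxOf b

/-!
Two RGA insertions of distinct timestamps commute, so it suffices to look at the order in
which `idr` is inserted last. Every element that insertion skips is at least `idr`, hence
differs from the smaller `ids`, so `idr` lands in front of every occurrence of `ids`.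
-/

lemma rgaBody_cons_of_lt {id x : ℕ} (h : x < id) (l : List ℕ) :
    rgaBody id (x :: l) = id :: x :: l :=
  if_pos h

lemma rgaBody_cons_of_not_lt {id x : ℕ} (h : ¬x < id) (l : List ℕ) :
    rgaBody id (x :: l) = x :: rgaBody id l :=
  if_neg h

lemma rgaBody_comm_of_lt {a b : ℕ} (hba : b < a) (l : List ℕ) :
    rgaBody a (rgaBody b l) = rgaBody b (rgaBody a l) := by
  have hab : ¬a < b := by omega
  induction l with
  | nil => simp [rgaBody, hba, hab]
  | cons x xs ih =>
    by_cases hxb : x < b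
    · simp [rgaBody_cons_of_lt, rgaBody_cons_of_not_lt, hxb, hba, hab, hxb.trans hba]
    by_cases hxa : x < a
    · simp [rgaBody_cons_of_lt, rgaBody_cons_of_not_lt, hxb, hxa, hab]
    · simp [rgaBody_cons_of_not_lt, hxb, hxa, ih]

lemma rgaBody_comm {a b : ℕ} (hab : a ≠ b) (l : List ℕ) :
    rgaBody a (rgaBody b l) = rgaBody b (rgaBody a l) := by
  rcases lt_or_gt_of_ne hab with h | h
  · exact (rgaBody_comm_of_lt h l).symm
  · exact rgaBody_comm_of_lt h l

lemma appearsBefore_cons_self {a b : ℕ} (hab : a ≠ b) (l : List ℕ) :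
    appearsBefore a b (a :: l) := by
  rw [appearsBefore, List.idxOf_cons_self, List.idxOf_cons_ne _ hab]
  exact Nat.succ_pos _

lemma appearsBefore_cons {a b x : ℕ} {l : List ℕ} (hxb : x ≠ b) (h : appearsBefore a b l) :
    appearsBefore a b (x :: l) := by
  rcases eq_or_ne x a with rfl | hxa
  · exact appearsBefore_cons_self hxb l
  · simpa [appearsBefore, List.idxOf_cons_ne _ hxa, List.idxOf_cons_ne _ hxb] using h

lemma appearsBefore_rgaBody {a b : ℕ} (hba : b < a) (l : List ℕ) :
    appearsBefore a b (rgaBody a l) := by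
  induction l with
  | nil => exact appearsBefore_cons_self hba.ne' []
  | cons x xs ih =>
    by_cases hxa : x < a
    · rw [rgaBody_cons_of_lt hxa]
      exact appearsBefore_cons_self hba.ne' _
    · rw [rgaBody_cons_of_not_lt hxa]
      exact appearsBefore_cons (by omega) ih

theorem rga_insert_conflict_general (L : List ℕ) (idr ids : ℕ)
    (h : ids < idr) :
    appearsBefore idr ids (rgaBody ids (rgaBody idr L)) ∧
    appearsBefore idr ids (rgaBody idr (rgaBody ids L)) := by
  rw [← rgaBody_comm h.ne']
  exact ⟨appearsBefore_rgaBody h _, appearsBefore_rgaBody h _⟩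

/-- If two concurrent RGA insertions with distinct timestamps `id_r > id_s` start at the
same position (here: the head of the segment `L`), then the element with the greater
timestamp `id_r` appears before `id_s` in the final list, regardless of the order in
which the two insertions are applied. -/
theorem rga_insert_conflict (L : List ℕ) (idr ids : ℕ)
    (h : ids < idr) (hr : idr ∉ L) (hs : ids ∉ L) :
    appearsBefore idr ids (rgaBody ids (rgaBody idr L)) ∧
    appearsBefore idr ids (rgaBody idr (rgaBody ids L)) :=
  rga_insert_conflict_general L idr ids h
end

section
/- RGA insertion into a list is commutative for concurrent insertions with distinct timestamps at the same position: applying insertion (prev, id_r) then (prev, id_s) yields the same final list state as applying (prev, id_s) then (prev, id_r), provided id_r ≠ id_s and both timestamps are greater than all timestamps already in the list segment following prev that were concurrent. -/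
lemma rgaBody_all_lt (id : ℕ) (L : List ℕ) (h : ∀ x ∈ L, x < id) :
    rgaBody id L = id :: L := by
  cases L with
  | nil => rfl
  | cons x xs => simp [rgaBody, h x (by simp)]

/-- RGA insertion is commutative for concurrent insertions with distinct timestamps at
the same position, when both timestamps exceed all timestamps already present in the
segment following the insertion position. -/
theorem rga_insert_comm (L : List ℕ) (idr ids : ℕ) (hne : idr ≠ ids)
    (hgt : ∀ x ∈ L, x < idr ∧ x < ids) :
    rgaBody ids (rgaBody idr L) = rgaBody idr (rgaBody ids L) := by
  rw [rgaBody_all_lt idr L (fun x hx => (hgt x hx).1),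
      rgaBody_all_lt ids L (fun x hx => (hgt x hx).2)]
  rcases lt_or_gt_of_ne hne with h | h
  · rw [rgaBody, if_pos h, rgaBody, if_neg (not_lt.2 h.le),
      rgaBody_all_lt idr L (fun x hx => (hgt x hx).1)]
  · rw [rgaBody, if_neg (not_lt.2 h.le), rgaBody, if_pos h,
      rgaBody_all_lt ids L (fun x hx => (hgt x hx).2)]
end

section
/- Let a list of distinct naturals be built by repeatedly applying RGA insertion (insert id after position prev, skipping elements greater than id). For any fixed multiset of insertion operations whose causal dependencies are respected, all application orders consistent with causality yield the same final list. -/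
/-- Insert `id` after the element `p` in the list, using the RGA rule on the suffix. -/
def insertAfterKey (p id : ℕ) : List ℕ → List ℕ
  | [] => []
  | x :: xs => if x = p then x :: rgaBody id xs else x :: insertAfterKey p id xs

/-- Apply one RGA insertion operation `(prev, id)`: `prev = none` means insert after
the head of the list; `prev = some p` means insert after the element `p`. -/
def rgaApply (L : List ℕ) (op : Option ℕ × ℕ) : List ℕ :=
  match op.1 with
  | none => rgaBody op.2 L
  | some p => insertAfterKey p op.2 L

/-- A sequence of insertion operations respects causality if each operation's `prev`
position is either the head or the id of an operation occurring earlier in the sequence. -/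
def causallyValid (ops : List (Option ℕ × ℕ)) : Prop :=
  ∀ l₁ op l₂, ops = l₁ ++ op :: l₂ → ∀ p, op.1 = some p → p ∈ l₁.map Prod.snd

theorem List.foldl_apply_eq_apply_foldl {α β : Type*} (f : β → α → β) (a : α) :
    ∀ (l : List α) (x : β), (∀ b ∈ l, ∀ y, f (f y a) b = f (f y b) a) →
      l.foldl f (f x a) = f (l.foldl f x) a
  | [], _, _ => rfl
  | b :: l, x, h => by
    rw [foldl_cons, foldl_cons, h b mem_cons_self x]
    exact foldl_apply_eq_apply_foldl f a l (f x b) fun c hc => h c (mem_cons_of_mem b hc)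

lemma rgaBody_comm_s13 {i j : ℕ} (h : i ≠ j) (L : List ℕ) :
    rgaBody i (rgaBody j L) = rgaBody j (rgaBody i L) := by
  induction L with
  | nil => simp only [rgaBody]; split_ifs <;> first | rfl | omega
  | cons x xs ih =>
    by_cases h1 : x < i <;> by_cases h2 : x < j <;>
      simp only [rgaBody, h1, h2, if_true, if_false, ih] <;>
      split_ifs <;> simp_all <;> omega

lemma rgaBody_insertAfterKey {i p j : ℕ} (hp : p ≠ i) (hij : i ≠ j) (L : List ℕ) :
    rgaBody i (insertAfterKey p j L) = insertAfterKey p j (rgaBody i L) := by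
  induction L with
  | nil => simp [rgaBody, insertAfterKey, hp.symm]
  | cons x xs ih =>
    by_cases h1 : x = p <;> by_cases h2 : x < i <;>
      simp only [rgaBody, insertAfterKey, h1, h2, if_true, if_false, ih, rgaBody_comm_s13 hij] <;>
      split_ifs <;> simp_all [insertAfterKey, Ne.symm hp]

lemma insertAfterKey_comm {p i q j : ℕ} (hij : i ≠ j) (hpj : p ≠ j) (hqi : q ≠ i)
    (L : List ℕ) :
    insertAfterKey p i (insertAfterKey q j L) = insertAfterKey q j (insertAfterKey p i L) := by
  induction L with
  | nil => simp [insertAfterKey]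
  | cons x xs ih =>
    by_cases h1 : x = p <;> by_cases h2 : x = q <;>
      simp only [insertAfterKey, h1, h2, if_true, if_false, ih] <;>
      split_ifs <;>
        simp_all [insertAfterKey, rgaBody_comm_s13 hij, rgaBody_insertAfterKey hqi hij,
          rgaBody_insertAfterKey hpj hij.symm]

def RgaIndependent (a b : Option ℕ × ℕ) : Prop :=
  a.2 ≠ b.2 ∧ a.1 ≠ some b.2 ∧ b.1 ≠ some a.2

lemma rgaApply_comm {a b : Option ℕ × ℕ} (h : RgaIndependent a b) (L : List ℕ) :
    rgaApply (rgaApply L a) b = rgaApply (rgaApply L b) a := by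
  obtain ⟨hid, hab, hba⟩ := h
  rcases a with ⟨_ | p, ia⟩ <;> rcases b with ⟨_ | q, ib⟩ <;>
    simp only [Option.some.injEq, ne_eq] at hid hab hba <;> simp only [rgaApply]
  · exact rgaBody_comm_s13 (Ne.symm hid) L
  · exact (rgaBody_insertAfterKey hba hid L).symm
  · exact rgaBody_insertAfterKey hab (Ne.symm hid) L
  · exact insertAfterKey_comm (Ne.symm hid) hba hab L

lemma foldl_rgaApply_middle {l₁ l₂ : List (Option ℕ × ℕ)} {op : Option ℕ × ℕ}
    (h : ∀ b ∈ l₂, RgaIndependent op b) (L : List ℕ) :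
    (l₁ ++ op :: l₂).foldl rgaApply L = rgaApply ((l₁ ++ l₂).foldl rgaApply L) op := by
  rw [List.foldl_append, List.foldl_cons, List.foldl_apply_eq_apply_foldl _ _ _ _
    fun b hb _ => rgaApply_comm (h b hb) _, List.foldl_append]

section Causality

variable {l l₁ l₂ : List (Option ℕ × ℕ)} {op : Option ℕ × ℕ}

lemma causallyValid_append_singleton :
    causallyValid (l ++ [op]) ↔
      causallyValid l ∧ ∀ p, op.1 = some p → p ∈ l.map Prod.snd := by
  refine ⟨fun h => ⟨fun l₁ b l₂ he => h l₁ b (l₂ ++ [op]) (by simp [he]), h l op [] rfl⟩,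
    ?_⟩
  rintro ⟨hl, hop⟩ l₁ b l₂ he
  rcases List.eq_nil_or_concat l₂ with rfl | ⟨l₂', c, rfl⟩
  · obtain ⟨rfl, h⟩ := List.append_inj' he rfl
    cases List.singleton_inj.mp h
    exact hop
  · rw [List.concat_eq_append, ← List.cons_append, ← List.append_assoc] at he
    exact hl l₁ b l₂' (List.append_inj' he rfl).1

lemma causallyValid.prev_mem (h : causallyValid l) {b : Option ℕ × ℕ} (hb : b ∈ l) {p : ℕ}
    (hp : b.1 = some p) : p ∈ l.map Prod.snd := by
  obtain ⟨u, v, rfl⟩ := List.append_of_mem hb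
  simp [h u b v rfl p hp]

lemma causallyValid.erase_middle (h : causallyValid (l₁ ++ op :: l₂))
    (hl₂ : ∀ b ∈ l₂, b.1 ≠ some op.2) : causallyValid (l₁ ++ l₂) := by
  induction l₂ using List.reverseRecOn with
  | nil => simpa using (causallyValid_append_singleton.mp h).1
  | append_singleton l₂ b ih =>
    rw [← List.cons_append, ← List.append_assoc, causallyValid_append_singleton] at h
    rw [← List.append_assoc, causallyValid_append_singleton]
    refine ⟨ih h.1 fun c hc => hl₂ c (by simp [hc]), fun p hp => ?_⟩
    have hne : p ≠ op.2 := by rintro rfl; exact hl₂ b (by simp) hp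
    simpa [hne] using h.2 p hp

lemma rgaIndependent_of_causallyValid (hl : causallyValid l) (hop : op.2 ∉ l.map Prod.snd)
    (hsub : l₂ ⊆ l) (hc : causallyValid (l₁ ++ op :: l₂))
    (hnd : ((l₁ ++ l₂).map Prod.snd).Nodup) :
    ∀ b ∈ l₂, RgaIndependent op b := by
  intro b hb
  have hbl : b.2 ∈ l.map Prod.snd := List.mem_map_of_mem (hsub hb)
  refine ⟨fun he => hop (he ▸ hbl), fun hp => ?_, fun hp => hop (hl.prev_mem (hsub hb) hp)⟩
  rw [List.map_append] at hnd
  exact List.disjoint_of_nodup_append hnd (hc l₁ op l₂ rfl b.2 hp) (List.mem_map_of_mem hb)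

end Causality

/-- RGA convergence: for a fixed multiset of insertion operations with distinct ids,
any two application orders consistent with causality yield the same final list. -/
theorem rga_convergence (ops1 ops2 : List (Option ℕ × ℕ))
    (hperm : ops1.Perm ops2)
    (hnodup : (ops1.map Prod.snd).Nodup)
    (hc1 : causallyValid ops1) (hc2 : causallyValid ops2) :
    ops1.foldl rgaApply [] = ops2.foldl rgaApply [] := by
  induction ops1 using List.reverseRecOn generalizing ops2 with
  | nil => rw [hperm.symm.eq_nil]
  | append_singleton l op ih =>
    obtain ⟨l₁, l₂, rfl⟩ := List.append_of_mem (hperm.subset (by simp) : op ∈ ops2)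
    have hperm' : l.Perm (l₁ ++ l₂) :=
      ((List.perm_append_singleton op l).symm.trans (hperm.trans List.perm_middle)).cons_inv
    obtain ⟨hl, -⟩ := causallyValid_append_singleton.mp hc1
    rw [List.map_append, List.nodup_append] at hnodup
    have hop : op.2 ∉ l.map Prod.snd := fun h => hnodup.2.2 _ h _ (by simp) rfl
    have hindep : ∀ b ∈ l₂, RgaIndependent op b :=
      rgaIndependent_of_causallyValid hl hop (fun b hb => hperm'.symm.subset (by simp [hb])) hc2
        ((hperm'.map Prod.snd).nodup_iff.mp hnodup.1)
    rw [foldl_rgaApply_middle hindep, List.foldl_append, ih (l₁ ++ l₂) hperm' hnodup.1 hl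
      (hc2.erase_middle fun b hb => (hindep b hb).2.2)]
    rfl
end

section
/- If a presence set is updated by a sequence of operations each of which either adds a singleton {id_i} or subtracts a set D_j, where no added id_i belongs to any subtracted D_j applied by a concurrent operation, then any two orderings of the sequence that preserve the relative order of causally related operations yield the same final presence set, provided each D_j contains exactly the ids added causally before it. -/
/-- An update to a presence set: either add a single timestamp, or clear a set of
timestamps (the dependency set of a delete/assign operation). -/
inductive POp where
  | add (id : ℕ)
  | clear (D : Set ℕ)

/-- Apply a presence-set update. -/
def papply (o : POp) (S : Set ℕ) : Set ℕ :=
  match o with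
  | .add id => S ∪ {id}
  | .clear D => S \ D

theorem presence_key {ι : Type*} (prec : ι → ι → Prop) (kind : ι → POp)
    (hconc : ∀ i j id D, kind i = POp.add id → kind j = POp.clear D →
      ¬ prec i j → ¬ prec j i → id ∉ D)
    (hafter : ∀ i j id D, kind i = POp.add id → kind j = POp.clear D →
      prec j i → id ∉ D) :
    ∀ (L : List ι), L.Pairwise (fun a b => ¬ prec b a) → ∀ (P : Set ℕ),
    L.foldl (fun S i => papply (kind i) S) P =
      {x | (x ∈ P ∨ ∃ i ∈ L, kind i = POp.add x) ∧
        ∀ j ∈ L, ∀ D, kind j = POp.clear D → x ∉ D} := by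
  intro L
  induction L with
  | nil => intro _ P; ext x; simp
  | cons a t ih =>
    intro hp P
    rw [List.pairwise_cons] at hp
    obtain ⟨ha, ht⟩ := hp
    rw [List.foldl_cons, ih ht]
    ext x
    simp only [Set.mem_setOf_eq, List.mem_cons]
    cases hk : kind a with
    | add id =>
      simp only [papply, hk, Set.mem_union, Set.mem_singleton_iff]
      constructor
      · rintro ⟨h1, h2⟩
        refine ⟨?_, ?_⟩
        · rcases h1 with (h | h) | ⟨i, hi, hki⟩
          · exact Or.inl h
          · exact Or.inr ⟨a, Or.inl rfl, by rw [hk, h]⟩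
          · exact Or.inr ⟨i, Or.inr hi, hki⟩
        · rintro j (rfl | hj) D hD
          · rw [hk] at hD; exact absurd hD (by simp)
          · exact h2 j hj D hD
      · rintro ⟨h1, h2⟩
        refine ⟨?_, fun j hj D hD => h2 j (Or.inr hj) D hD⟩
        rcases h1 with h | ⟨i, rfl | hi, hki⟩
        · exact Or.inl (Or.inl h)
        · rw [hk] at hki; cases hki; exact Or.inl (Or.inr rfl)
        · exact Or.inr ⟨i, hi, hki⟩
    | clear D =>
      simp only [papply, hk, Set.mem_diff]
      constructor
      · rintro ⟨h1, h2⟩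
        have hxD : x ∉ D := by
          rcases h1 with ⟨hx, hxD⟩ | ⟨i, hi, hki⟩
          · exact hxD
          · by_cases hai : prec a i
            · exact hafter i a x D hki hk hai
            · exact hconc i a x D hki hk (ha i hi) hai
        refine ⟨?_, ?_⟩
        · rcases h1 with ⟨hx, _⟩ | ⟨i, hi, hki⟩
          · exact Or.inl hx
          · exact Or.inr ⟨i, Or.inr hi, hki⟩
        · rintro j (rfl | hj) D' hD'
          · rw [hk] at hD'; cases hD'; exact hxD
          · exact h2 j hj D' hD'
      · rintro ⟨h1, h2⟩
        have hxD : x ∉ D := h2 a (Or.inl rfl) D hk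
        refine ⟨?_, fun j hj D' hD' => h2 j (Or.inr hj) D' hD'⟩
        rcases h1 with h | ⟨i, rfl | hi, hki⟩
        · exact Or.inl ⟨h, hxD⟩
        · rw [hk] at hki; cases hki
        · exact Or.inr ⟨i, hi, hki⟩

/-- If presence-set updates are indexed by operations with a causality relation `prec`
such that (i) an add concurrent with a clear has its id outside the clear's dependency
set, (ii) an add causally before a clear has its id inside the clear's dependency set,
and (iii) an add causally after a clear has its id outside the clear's dependency set,
then any two causality-respecting orderings (linear extensions) of the same operations
yield the same final presence set. -/
theorem presence_order_independent {ι : Type*} (prec : ι → ι → Prop)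
    (kind : ι → POp)
    (hconc : ∀ i j id D, kind i = POp.add id → kind j = POp.clear D →
      ¬ prec i j → ¬ prec j i → id ∉ D)
    (hbefore : ∀ i j id D, kind i = POp.add id → kind j = POp.clear D →
      prec i j → id ∈ D)
    (hafter : ∀ i j id D, kind i = POp.add id → kind j = POp.clear D →
      prec j i → id ∉ D)
    (L1 L2 : List ι) (hperm : L1.Perm L2) (hnodup : L1.Nodup)
    (hlin1 : L1.Pairwise (fun a b => ¬ prec b a))
    (hlin2 : L2.Pairwise (fun a b => ¬ prec b a))
    (P : Set ℕ) :
    L1.foldl (fun S i => papply (kind i) S) P =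
    L2.foldl (fun S i => papply (kind i) S) P := by
  rw [presence_key prec kind hconc hafter L1 hlin1 P,
      presence_key prec kind hconc hafter L2 hlin2 P]
  ext x
  simp only [Set.mem_setOf_eq]
  constructor <;> rintro ⟨h1, h2⟩ <;>
    exact ⟨h1.imp id (fun ⟨i, hi, hki⟩ => ⟨i, by first | exact hperm.mem_iff.mp hi | exact hperm.mem_iff.mpr hi, hki⟩),
      fun j hj D hD => h2 j (by first | exact hperm.mem_iff.mpr hj | exact hperm.mem_iff.mp hj) D hD⟩
end

section
/- If every pair of concurrent operations commutes (applying them in either order to any state yields the same state), then any two causally-consistent linearizations of the same finite set of operations produce the same final state when applied in order to the same initial state. -/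
/-! Induct on the first linearization. Its head `a` sits in the second one as `l ++ a :: r`;
every `b ∈ l` comes after `a` in the first list and before it in the second, so neither of
`a`, `b` precedes the other, and `a` can be commuted past all of `l` to the front. -/

namespace List

variable {α β : Type*}

theorem foldl_append_cons_of_commute (f : β → α → β) {x : α} {l : List α}
    (hx : ∀ b ∈ l, ∀ s, f (f s b) x = f (f s x) b) (r : List α) (s : β) :
    (l ++ x :: r).foldl f s = (l ++ r).foldl f (f s x) := by
  induction l generalizing s with
  | nil => rfl
  | cons b l ih =>
    rw [cons_append, foldl_cons, ih (fun c hc => hx c (mem_cons_of_mem b hc)),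
      hx b mem_cons_self s]
    rfl

theorem foldl_eq_of_perm_of_pairwise {R : α → α → Prop} (f : β → α → β)
    (hf : ∀ a b, a ≠ b → R a b → R b a → ∀ s, f (f s a) b = f (f s b) a)
    {l₁ l₂ : List α} (hp : l₁.Perm l₂) (hnd : l₁.Nodup)
    (h₁ : l₁.Pairwise R) (h₂ : l₂.Pairwise R) (s : β) :
    l₁.foldl f s = l₂.foldl f s := by
  induction l₁ generalizing l₂ s with
  | nil => rw [hp.nil_eq]
  | cons a t ih =>
    obtain ⟨l, r, rfl⟩ := append_of_mem (hp.subset mem_cons_self)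
    obtain ⟨hat, hnd⟩ := nodup_cons.mp hnd
    obtain ⟨hRa, h₁⟩ := pairwise_cons.mp h₁
    have hp : t.Perm (l ++ r) := (perm_cons a).mp (hp.trans perm_middle)
    have ha : ∀ b ∈ l, ∀ s, f (f s b) a = f (f s a) b := fun b hb =>
      have hbt : b ∈ t := hp.symm.subset (mem_append_left r hb)
      hf b a (ne_of_mem_of_not_mem hbt hat) ((pairwise_append.mp h₂).2.2 b hb a mem_cons_self)
        (hRa b hbt)
    rw [foldl_cons, foldl_append_cons_of_commute f ha]
    exact ih hp hnd h₁ (h₂.sublist ((sublist_cons_self a r).append_left l)) (f s a)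

end List

theorem concurrent_comm_implies_convergence_general {Op State : Type*}
    (prec : Op → Op → Prop)
    (apply : Op → State → State)
    (hcomm : ∀ o1 o2, o1 ≠ o2 → ¬ prec o1 o2 → ¬ prec o2 o1 →
      ∀ s, apply o2 (apply o1 s) = apply o1 (apply o2 s))
    (L1 L2 : List Op) (hperm : L1.Perm L2) (hnodup : L1.Nodup)
    (hlin1 : L1.Pairwise (fun a b => ¬ prec b a))
    (hlin2 : L2.Pairwise (fun a b => ¬ prec b a))
    (s : State) :
    L1.foldl (fun s o => apply o s) s = L2.foldl (fun s o => apply o s) s :=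
  List.foldl_eq_of_perm_of_pairwise _ (fun a b hab hba hab' => hcomm a b hab hab' hba)
    hperm hnodup hlin1 hlin2 s

/-- If every pair of concurrent (causally incomparable) operations commutes, then any
two causally-consistent linearizations of the same finite set of operations produce the
same final state from the same initial state. -/
theorem concurrent_comm_implies_convergence {Op State : Type*}
    (prec : Op → Op → Prop)
    (hirr : Irreflexive prec) (htrans : Transitive prec)
    (apply : Op → State → State)
    (hcomm : ∀ o1 o2, o1 ≠ o2 → ¬ prec o1 o2 → ¬ prec o2 o1 →
      ∀ s, apply o2 (apply o1 s) = apply o1 (apply o2 s))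
    (L1 L2 : List Op) (hperm : L1.Perm L2) (hnodup : L1.Nodup)
    (hlin1 : L1.Pairwise (fun a b => ¬ prec b a))
    (hlin2 : L2.Pairwise (fun a b => ¬ prec b a))
    (s : State) :
    L1.foldl (fun s o => apply o s) s = L2.foldl (fun s o => apply o s) s :=
  concurrent_comm_implies_convergence_general prec apply hcomm L1 L2 hperm hnodup hlin1 hlin2 s
end

section
/- A permutation of a list that is sorted with respect to a partial order and is obtained by swapping only adjacent incomparable elements can transform any linear extension of a finite poset into any other linear extension; i.e., any two linear extensions of a finite poset are connected by a sequence of adjacent transpositions of incomparable elements. -/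
/-!
Induct on `L2 = a :: t`. Write `L1 = l₁ ++ a :: l₂`. Every `x ∈ l₁` lies in `t`, so it is not
above `a` because `L2` lists `a` first, and `a` is not above `x` because `L1` lists `x` first.
Hence `a` can be swapped leftwards past all of `l₁`, and the remaining lists `l₁ ++ l₂` and `t`
are again linear extensions of the same set.
-/

/-- One adjacent transposition of two `prec`-incomparable elements. -/
def AdjSwap {α : Type*} (prec : α → α → Prop) (L L' : List α) : Prop :=
  ∃ l₁ a b l₂, ¬ prec a b ∧ ¬ prec b a ∧
    L = l₁ ++ a :: b :: l₂ ∧ L' = l₁ ++ b :: a :: l₂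

open Relation

namespace AdjSwap

variable {α : Type*} {prec : α → α → Prop}

theorem cons {L L' : List α} (x : α) (h : AdjSwap prec L L') :
    AdjSwap prec (x :: L) (x :: L') := by
  obtain ⟨l₁, a, b, l₂, hab, hba, rfl, rfl⟩ := h
  exact ⟨x :: l₁, a, b, l₂, hab, hba, rfl, rfl⟩

theorem reflTransGen_cons {L L' : List α} (x : α) (h : ReflTransGen (AdjSwap prec) L L') :
    ReflTransGen (AdjSwap prec) (x :: L) (x :: L') :=
  h.lift (x :: ·) fun _ _ => cons x

theorem reflTransGen_append_cons (a : α) (l₁ l₂ : List α)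
    (h : ∀ x ∈ l₁, ¬ prec x a ∧ ¬ prec a x) :
    ReflTransGen (AdjSwap prec) (l₁ ++ a :: l₂) (a :: (l₁ ++ l₂)) := by
  induction l₁ with
  | nil => exact .refl
  | cons x l₁ ih =>
    obtain ⟨hxa, hax⟩ := h x List.mem_cons_self
    have swap : AdjSwap prec (x :: a :: (l₁ ++ l₂)) (a :: x :: (l₁ ++ l₂)) :=
      ⟨[], x, a, l₁ ++ l₂, hxa, hax, rfl, rfl⟩
    exact (reflTransGen_cons x (ih fun y hy => h y (List.mem_cons_of_mem x hy))).tail swap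

end AdjSwap

theorem linear_extensions_connected_general {α : Type*} (prec : α → α → Prop)
    (L1 L2 : List α) (hperm : L1.Perm L2)
    (hlin1 : L1.Pairwise (fun a b => ¬ prec b a))
    (hlin2 : L2.Pairwise (fun a b => ¬ prec b a)) :
    Relation.ReflTransGen (AdjSwap prec) L1 L2 := by
  induction L2 generalizing L1 with
  | nil => exact hperm.eq_nil ▸ .refl
  | cons a t ih =>
    obtain ⟨l₁, l₂, rfl⟩ := List.append_of_mem (hperm.mem_iff.2 List.mem_cons_self)
    have hperm' : (l₁ ++ l₂).Perm t := (List.perm_middle.symm.trans hperm).cons_inv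
    have hinc : ∀ x ∈ l₁, ¬ prec x a ∧ ¬ prec a x := fun x hx =>
      ⟨List.rel_of_pairwise_cons hlin2 (hperm'.subset (List.mem_append_left l₂ hx)),
        (List.pairwise_append.1 hlin1).2.2 x hx a List.mem_cons_self⟩
    have hlin1' : (l₁ ++ l₂).Pairwise (fun a b => ¬ prec b a) :=
      hlin1.sublist ((List.sublist_cons_self a l₂).append_left l₁)
    exact (AdjSwap.reflTransGen_append_cons a l₁ l₂ hinc).trans
      (AdjSwap.reflTransGen_cons a (ih _ hperm' hlin1' hlin2.of_cons))

/-- Any two linear extensions of a finite strict partial order (lists enumerating the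
same set without duplicates, respecting `prec`) are connected by a sequence of adjacent
transpositions of incomparable elements. -/
theorem linear_extensions_connected {α : Type*} (prec : α → α → Prop)
    (hirr : Irreflexive prec) (htrans : Transitive prec)
    (L1 L2 : List α) (hperm : L1.Perm L2) (hnodup : L1.Nodup)
    (hlin1 : L1.Pairwise (fun a b => ¬ prec b a))
    (hlin2 : L2.Pairwise (fun a b => ¬ prec b a)) :
    Relation.ReflTransGen (AdjSwap prec) L1 L2 :=
  linear_extensions_connected_general prec L1 L2 hperm hlin1 hlin2
end
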